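/- arXiv:1706.08813 — 7 statements merged into one kernel-verified Lean document; each statement's English description precedes it below -/
import Mathlib

section
/- Let z = |z|e^{iθ} be a nonzero complex number with 0 < θ < π, and let f(X,Y) = XY(X − zY)(X − z̄Y) = XY(X² − 2|z|cos θ · XY + |z|²Y²). Then q(f) = (2|z|²/3)(cos²θ − 3/4). In particular q(f) = 0 if and only if θ = π/6 or θ = 5π/6, and q(f) < 0 if and only if cos²θ < 3/4, i.e. π/6 < θ < 5π/6. -/
/-- Coefficient convention: `a 0, a 1, a 2, a 3, a 4` are the coefficients of
`X⁴, X³Y, X²Y², XY³, Y⁴` respectively (so `a 0 = a₄, …, a 4 = a₀` in the paper's notation). -/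
noncomputable def qq (a : Fin 5 → ℝ) : ℝ := 2 * a 0 * a 4 - (1/2) * a 3 * a 1 + (1/6) * (a 2)^2

/-- The polarization of `qq`. -/
noncomputable def bb (f g : Fin 5 → ℝ) : ℝ := (1/2) * (qq (f + g) - qq f - qq g)

/-- Evaluation of the quartic with coefficient vector `a` at `(x, y)`. -/
noncomputable def ev (a : Fin 5 → ℝ) (x y : ℝ) : ℝ :=
  a 0 * x^4 + a 1 * x^3 * y + a 2 * x^2 * y^2 + a 3 * x * y^3 + a 4 * y^4

/-- For `z = m·e^{iθ}` with `m = |z| > 0` and `0 < θ < π`, the quartic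
`XY(X − zY)(X − z̄Y) = XY(X² − 2m cos θ·XY + m²Y²)` satisfies
`q(f) = (2m²/3)(cos²θ − 3/4)`; it vanishes iff `θ = π/6` or `θ = 5π/6`, and is negative
iff `π/6 < θ < 5π/6` (equivalently `cos²θ < 3/4`). -/
theorem stmt_5 (m θ : ℝ) (hm : 0 < m) (hθ0 : 0 < θ) (hθπ : θ < Real.pi) (a : Fin 5 → ℝ)
    (h : ∀ x y : ℝ,
      ev a x y = x * y * (x^2 - 2 * m * Real.cos θ * x * y + m^2 * y^2)) :
    qq a = (2 * m^2 / 3) * ((Real.cos θ)^2 - 3/4) ∧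
    (qq a = 0 ↔ θ = Real.pi / 6 ∨ θ = 5 * Real.pi / 6) ∧
    (qq a < 0 ↔ (Real.cos θ)^2 < 3/4) ∧
    (qq a < 0 ↔ Real.pi / 6 < θ ∧ θ < 5 * Real.pi / 6) := by
  have h10 := h 1 0
  have h01 := h 0 1
  have h11 := h 1 1
  have h1m := h 1 (-1)
  have h21 := h 2 1
  simp only [ev] at h10 h01 h11 h1m h21
  set c := Real.cos θ with hc
  have ha0 : a 0 = 0 := by linear_combination h10
  have ha4 : a 4 = 0 := by linear_combination h01
  have ha2 : a 2 = -2 * m * c := by linear_combination (h11 + h1m) / 2 - ha0 - ha4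
  have ha1 : a 1 = 1 := by
    linear_combination (h21 - h11 + h1m) / 6 - (8/3) * ha0 - (1/6) * ha4 - (2/3) * ha2
  have ha3 : a 3 = m ^ 2 := by linear_combination (h11 - h1m) / 2 - ha1
  have hq : qq a = (2 * m ^ 2 / 3) * (c ^ 2 - 3 / 4) := by
    simp only [qq, ha0, ha4, ha1, ha2, ha3]; ring
  clear h h10 h01 h11 h1m h21 ha0 ha1 ha2 ha3 ha4
  have hs2 : (Real.sqrt 3 / 2) ^ 2 = 3 / 4 := by
    rw [div_pow, Real.sq_sqrt] <;> norm_num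
  have hsnn : (0:ℝ) ≤ Real.sqrt 3 := Real.sqrt_nonneg 3
  have hπ := Real.pi_pos
  have mθ : θ ∈ Set.Icc 0 Real.pi := ⟨le_of_lt hθ0, le_of_lt hθπ⟩
  have m16 : Real.pi / 6 ∈ Set.Icc 0 Real.pi := ⟨by linarith, by linarith⟩
  have m56 : 5 * Real.pi / 6 ∈ Set.Icc 0 Real.pi := ⟨by linarith, by linarith⟩
  have hc16 : Real.cos (Real.pi / 6) = Real.sqrt 3 / 2 := Real.cos_pi_div_six
  have hc56 : Real.cos (5 * Real.pi / 6) = -(Real.sqrt 3 / 2) := by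
    have h5 : (5:ℝ) * Real.pi / 6 = Real.pi - Real.pi / 6 := by ring
    rw [h5, Real.cos_pi_sub, hc16]
  have hmpos : (0:ℝ) < 2 * m ^ 2 / 3 := by positivity
  have hcc : c ^ 2 = 3 / 4 ↔ (θ = Real.pi / 6 ∨ θ = 5 * Real.pi / 6) := by
    constructor
    · intro hcsq
      have hfac : (c - Real.sqrt 3 / 2) * (c + Real.sqrt 3 / 2) = 0 := by
        linear_combination hcsq - hs2
      rcases mul_eq_zero.mp hfac with h' | h'
      · left
        apply Real.injOn_cos mθ m16
        rw [hc16, ← hc]; linarith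
      · right
        apply Real.injOn_cos mθ m56
        rw [hc56, ← hc]; linarith
    · rintro (rfl | rfl)
      · rw [hc, hc16]; exact hs2
      · rw [hc, hc56, neg_pow, hs2]; norm_num
  have hlt : c ^ 2 < 3 / 4 ↔ (Real.pi / 6 < θ ∧ θ < 5 * Real.pi / 6) := by
    have h1 : c < Real.sqrt 3 / 2 ↔ Real.pi / 6 < θ := by
      rw [← hc16, hc]
      exact Real.strictAntiOn_cos.lt_iff_gt mθ m16
    have h2 : -(Real.sqrt 3 / 2) < c ↔ θ < 5 * Real.pi / 6 := by
      rw [← hc56, hc]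
      exact Real.strictAntiOn_cos.lt_iff_gt m56 mθ
    constructor
    · intro hcsq
      refine ⟨h1.mp ?_, h2.mp ?_⟩ <;> nlinarith
    · rintro ⟨l1, l2⟩
      have := h1.mpr l1
      have := h2.mpr l2
      nlinarith
  have hneg : (2 * m ^ 2 / 3) * (c ^ 2 - 3 / 4) < 0 ↔ c ^ 2 < 3 / 4 := by
    constructor <;> intro h' <;> nlinarith
  refine ⟨hq, ?_, ?_, ?_⟩
  · rw [hq, ← hcc]
    constructor
    · intro h'
      rcases mul_eq_zero.mp h' with h'' | h''
      · exact absurd h'' (ne_of_gt hmpos)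
      · linarith
    · intro h'; rw [h']; ring
  · rw [hq]; exact hneg
  · rw [hq, ← hlt]; exact hneg
end

section
/- Every real homogeneous quartic with four distinct real roots in RP¹ has q(f) > 0. -/
/-- A quartic with four distinct real projective roots, i.e. a product of four pairwise
non-proportional real linear forms, has `q(f) > 0`. -/
theorem stmt_8 (L : Fin 4 → ℝ × ℝ)
    (hdist : ∀ i j : Fin 4, i ≠ j → (L i).1 * (L j).2 - (L j).1 * (L i).2 ≠ 0)
    (a : Fin 5 → ℝ)
    (h : ∀ x y : ℝ, ev a x y = ∏ i : Fin 4, ((L i).1 * x + (L i).2 * y)) :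
    0 < qq a := by
  set p0 := (L 0).1 with hp0
  set q0 := (L 0).2 with hq0
  set p1 := (L 1).1 with hp1
  set q1 := (L 1).2 with hq1
  set p2 := (L 2).1 with hp2
  set q2 := (L 2).2 with hq2
  set p3 := (L 3).1 with hp3
  set q3 := (L 3).2 with hq3
  have E0 := h 1 0
  have E4 := h 0 1
  have E1 := h 1 1
  have E2 := h 1 (-1)
  have E3 := h 1 2
  simp only [ev, Fin.prod_univ_four] at E0 E4 E1 E2 E3
  norm_num at E0 E4 E1 E2 E3
  have ha0 : a 0 = p0 * p1 * p2 * p3 := by linear_combination E0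
  have ha4 : a 4 = q0 * q1 * q2 * q3 := by linear_combination E4
  have ha2 : a 2 = (p0 + q0) * (p1 + q1) * (p2 + q2) * (p3 + q3) / 2
      + (p0 - q0) * (p1 - q1) * (p2 - q2) * (p3 - q3) / 2
      - p0 * p1 * p2 * p3 - q0 * q1 * q2 * q3 := by
    linear_combination (1/2) * E1 + (1/2) * E2 - E0 - E4
  have ha3 : a 3 = ((p0 + 2*q0) * (p1 + 2*q1) * (p2 + 2*q2) * (p3 + 2*q3)
      + 3 * (p0 * p1 * p2 * p3)
      - 3 * ((p0 + q0) * (p1 + q1) * (p2 + q2) * (p3 + q3))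
      - (p0 - q0) * (p1 - q1) * (p2 - q2) * (p3 - q3)
      - 12 * (q0 * q1 * q2 * q3)) / 6 := by
    linear_combination (1/6) * E3 + (1/2) * E0 - (1/2) * E1 - (1/6) * E2 - 2 * E4
  have ha1 : a 1 = (6 * ((p0 + q0) * (p1 + q1) * (p2 + q2) * (p3 + q3))
      - 2 * ((p0 - q0) * (p1 - q1) * (p2 - q2) * (p3 - q3))
      - (p0 + 2*q0) * (p1 + 2*q1) * (p2 + 2*q2) * (p3 + 2*q3)
      - 3 * (p0 * p1 * p2 * p3)
      + 12 * (q0 * q1 * q2 * q3)) / 6 := by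
    linear_combination E1 - (1/3) * E2 - (1/6) * E3 - (1/2) * E0 + 2 * E4
  have key : 12 * qq a = ((p0*q1 - p1*q0) * (p2*q3 - p3*q2))^2
      + ((p0*q2 - p2*q0) * (p1*q3 - p3*q1))^2
      + ((p0*q3 - p3*q0) * (p1*q2 - p2*q1))^2 := by
    rw [qq, ha0, ha1, ha2, ha3, ha4]; ring
  have d01 := hdist 0 1 (by decide)
  have d23 := hdist 2 3 (by decide)
  have d02 := hdist 0 2 (by decide)
  have d13 := hdist 1 3 (by decide)
  have d03 := hdist 0 3 (by decide)
  have d12 := hdist 1 2 (by decide)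
  have t1 : 0 < ((p0*q1 - p1*q0) * (p2*q3 - p3*q2))^2 :=
    pow_two_pos_of_ne_zero (mul_ne_zero d01 d23)
  have t2 : 0 < ((p0*q2 - p2*q0) * (p1*q3 - p3*q1))^2 :=
    pow_two_pos_of_ne_zero (mul_ne_zero d02 d13)
  have t3 : 0 < ((p0*q3 - p3*q0) * (p1*q2 - p2*q1))^2 :=
    pow_two_pos_of_ne_zero (mul_ne_zero d03 d12)
  linarith
end

section
/- Every real homogeneous quartic with no real roots (i.e. a product of two real positive-definite quadratic forms) satisfies q(f) > 0. -/
/-- A quartic with no real projective roots, i.e. a product of two positive definite real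
quadratic forms, has `q(f) > 0`. -/
theorem stmt_9 (A₁ B₁ C₁ A₂ B₂ C₂ : ℝ)
    (h₁ : ∀ x y : ℝ, (x, y) ≠ (0, 0) → 0 < A₁ * x^2 + B₁ * x * y + C₁ * y^2)
    (h₂ : ∀ x y : ℝ, (x, y) ≠ (0, 0) → 0 < A₂ * x^2 + B₂ * x * y + C₂ * y^2)
    (a : Fin 5 → ℝ)
    (h : ∀ x y : ℝ,
      ev a x y = (A₁ * x^2 + B₁ * x * y + C₁ * y^2) * (A₂ * x^2 + B₂ * x * y + C₂ * y^2)) :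
    0 < qq a := by
  have hA1 : 0 < A₁ := by have := h₁ 1 0 (by simp); nlinarith [this]
  have hA2 : 0 < A₂ := by have := h₂ 1 0 (by simp); nlinarith [this]
  have hd1 : discrim A₁ B₁ C₁ < 0 := by
    apply discrim_lt_zero hA1.ne'
    intro x
    have := h₁ x 1 (by simp)
    nlinarith [this]
  have hd2 : discrim A₂ B₂ C₂ < 0 := by
    apply discrim_lt_zero hA2.ne'
    intro x
    have := h₂ x 1 (by simp)
    nlinarith [this]
  rw [discrim] at hd1 hd2
  have e1 := h 1 0
  have e2 := h 0 1
  have e3 := h 1 1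
  have e4 := h 1 (-1)
  have e5 := h 2 1
  simp only [ev] at e1 e2 e3 e4 e5
  have ha0 : a 0 = A₁ * A₂ := by linear_combination e1
  have ha4 : a 4 = C₁ * C₂ := by linear_combination e2
  have ha1 : a 1 = A₁ * B₂ + B₁ * A₂ := by
    linear_combination (-2 : ℝ) * e1 + (1/2 : ℝ) * e2 - (1/2 : ℝ) * e3 - (1/6 : ℝ) * e4 + (1/6 : ℝ) * e5
  have ha2 : a 2 = A₁ * C₂ + B₁ * B₂ + C₁ * A₂ := by
    linear_combination (-1 : ℝ) * e1 - (1 : ℝ) * e2 + (1/2 : ℝ) * e3 + (1/2 : ℝ) * e4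
  have ha3 : a 3 = B₁ * C₂ + C₁ * B₂ := by
    linear_combination (2 : ℝ) * e1 - (1/2 : ℝ) * e2 + (1 : ℝ) * e3 - (1/3 : ℝ) * e4 - (1/6 : ℝ) * e5
  rw [qq, ha0, ha1, ha2, ha3, ha4]
  nlinarith [sq_nonneg (A₁ * C₂ + C₁ * A₂ - B₁ * B₂ / 2),
    mul_pos (show (0:ℝ) < 4 * A₁ * C₁ - B₁^2 by nlinarith) (show (0:ℝ) < 4 * A₂ * C₂ - B₂^2 by nlinarith)]
end

section
/- For r > 0 with r ≠ 1, the three vectors v_H = −4X⁴ + 4r²Y⁴, v_P = −4X³Y − 2(r²+1)XY³, v_E = 2(r²−1)X³Y + 2(r²−1)XY³ satisfy: q(v_H) < 0, B(v_H, v_P) = 0, B(v_H, v_E) = 0, and the plane spanned by {v_P, v_E} has signature (1,1). Hence the span of {v_H, v_P, v_E} is a 3-dimensional subspace of signature (2,1). -/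
theorem bb_apply (f g : Fin 5 → ℝ) :
    bb f g = f 0 * g 4 + f 4 * g 0 - (f 1 * g 3 + f 3 * g 1) / 4 + f 2 * g 2 / 6 := by
  simp only [bb, qq, Pi.add_apply]
  ring

theorem bb_comm (f g : Fin 5 → ℝ) : bb f g = bb g f := by
  simp only [bb_apply]
  ring

theorem bb_self (f : Fin 5 → ℝ) : bb f f = qq f := by
  simp only [bb_apply, qq]
  ring

theorem bb_add_smul_left (s t : ℝ) (f g h : Fin 5 → ℝ) :
    bb (s • f + t • g) h = s * bb f h + t * bb g h := by
  simp only [bb_apply, Pi.add_apply, Pi.smul_apply, smul_eq_mul]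
  ring

theorem qq_smul (c : ℝ) (f : Fin 5 → ℝ) : qq (c • f) = c ^ 2 * qq f := by
  simp only [qq, Pi.smul_apply, smul_eq_mul]
  ring

theorem qq_smul_add_smul (a b : ℝ) (f g : Fin 5 → ℝ) :
    qq (a • f + b • g) = a ^ 2 * qq f + 2 * a * b * bb f g + b ^ 2 * qq g := by
  simp only [qq, bb_apply, Pi.add_apply, Pi.smul_apply, smul_eq_mul]
  ring

theorem qq_sub_proj {f g : Fin 5 → ℝ} (hg : qq g ≠ 0) :
    qq (f - (bb f g / qq g) • g) = (qq f * qq g - bb f g ^ 2) / qq g := by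
  rw [sub_eq_add_neg, ← neg_smul, ← one_smul ℝ f, qq_smul_add_smul, one_smul]
  field_simp
  ring

theorem linearIndependent_pair_of_gram_ne_zero {f g : Fin 5 → ℝ}
    (hfg : qq f * qq g - bb f g ^ 2 ≠ 0) : LinearIndependent ℝ ![f, g] := by
  rw [LinearIndependent.pair_iff]
  intro s t hst
  have hf : s * qq f + t * bb f g = 0 := by
    rw [← bb_self, bb_comm f g, ← bb_add_smul_left, hst, bb_apply]; simp
  have hg : s * bb f g + t * qq g = 0 := by
    rw [← bb_self, ← bb_add_smul_left, hst, bb_apply]; simp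
  constructor
  · apply (mul_eq_zero.mp _).resolve_right hfg
    linear_combination qq g * hf - bb f g * hg
  · apply (mul_eq_zero.mp _).resolve_right hfg
    linear_combination qq f * hg - bb f g * hf

theorem qq_neg_of_mem_span_pair {f g v : Fin 5 → ℝ} (hf : qq f < 0) (hg : qq g < 0)
    (hfg : bb f g = 0) (hv : v ∈ Submodule.span ℝ {f, g}) (hv0 : v ≠ 0) : qq v < 0 := by
  obtain ⟨a, b, rfl⟩ := Submodule.mem_span_pair.mp hv
  rw [qq_smul_add_smul, hfg, mul_zero, add_zero]
  have ha : a ^ 2 * qq f ≤ 0 := mul_nonpos_of_nonneg_of_nonpos (sq_nonneg a) hf.le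
  have hb : b ^ 2 * qq g ≤ 0 := mul_nonpos_of_nonneg_of_nonpos (sq_nonneg b) hg.le
  by_cases ha0 : a = 0
  · have hb0 : b ≠ 0 := by rintro rfl; simp [ha0] at hv0
    have : b ^ 2 * qq g < 0 := mul_neg_of_pos_of_neg (by positivity) hg
    linarith
  · have : a ^ 2 * qq f < 0 := mul_neg_of_pos_of_neg (by positivity) hf
    linarith

theorem qq_pos_of_mem_span_singleton {p v : Fin 5 → ℝ} (hp : 0 < qq p)
    (hv : v ∈ Submodule.span ℝ {p}) (hv0 : v ≠ 0) : 0 < qq v := by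
  obtain ⟨a, rfl⟩ := Submodule.mem_span_singleton.mp hv
  have ha : a ≠ 0 := by rintro rfl; simp at hv0
  rw [qq_smul]
  positivity

theorem finrank_sup_eq_add_of_neg_of_pos {K V : Type*} [DivisionRing K] [Preorder K]
    [AddCommGroup V] [Module K V] (Q : V → K) (N P : Submodule K V)
    [FiniteDimensional K N] [FiniteDimensional K P]
    (hN : ∀ v ∈ N, v ≠ 0 → Q v < 0) (hP : ∀ v ∈ P, v ≠ 0 → 0 < Q v) :
    Module.finrank K ↑(N ⊔ P) = Module.finrank K N + Module.finrank K P := by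
  have hNP : N ⊓ P = ⊥ := by
    refine (Submodule.eq_bot_iff _).mpr fun v hv => ?_
    by_contra hv0
    exact (hN v hv.1 hv0).not_gt (hP v hv.2 hv0)
  rw [← Submodule.finrank_sup_add_finrank_inf_eq, hNP, finrank_bot, add_zero]

theorem span_pair_sup_span_sub_smul {R M : Type*} [Ring R] [AddCommGroup M] [Module R M]
    (h f g : M) (c : R) :
    Submodule.span R {h, g} ⊔ Submodule.span R {f - c • g} = Submodule.span R {h, f, g} := by
  have hg : g ∈ Submodule.span R {h, f, g} := Submodule.subset_span (by simp)
  have hg' : g ∈ Submodule.span R {h, g} := Submodule.subset_span (by simp)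
  have hf : f ∈ Submodule.span R {h, g} ⊔ Submodule.span R {f - c • g} := by
    have := add_mem (Submodule.mem_sup_right (Submodule.mem_span_singleton_self (f - c • g)))
      (Submodule.mem_sup_left (Submodule.smul_mem _ c hg'))
    rwa [sub_add_cancel] at this
  apply le_antisymm
  · refine sup_le (Submodule.span_mono (by simp [Set.insert_subset_iff])) ?_
    rw [Submodule.span_singleton_le_iff_mem]
    exact sub_mem (Submodule.subset_span (by simp)) (Submodule.smul_mem _ c hg)
  · rw [Submodule.span_le]
    rintro x (rfl | rfl | rfl)
    · exact Submodule.mem_sup_left (Submodule.subset_span (by simp))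
    · exact hf
    · exact Submodule.mem_sup_left (Submodule.subset_span (by simp))

theorem finrank_span_pair {K V : Type*} [DivisionRing K] [AddCommGroup V] [Module K V] {f g : V}
    (hfg : LinearIndependent K ![f, g]) : Module.finrank K (Submodule.span K {f, g}) = 2 := by
  rw [← Matrix.range_cons_cons_empty f g ![], finrank_span_eq_card hfg, Fintype.card_fin]

/-- For `r > 0`, `r ≠ 1`, the tangent vectors `v_H = −4X⁴ + 4r²Y⁴`,
`v_P = −4X³Y − 2(r²+1)XY³`, `v_E = 2(r²−1)X³Y + 2(r²−1)XY³` at `(X²+Y²)(X²+r²Y²)` satisfy: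
`q(v_H) < 0`, `v_H ⊥ v_P`, `v_H ⊥ v_E`, the plane `span{v_P, v_E}` is nondegenerate
indefinite (signature (1,1)), and `span{v_H, v_P, v_E}` is 3-dimensional of
signature (2,1) (two negative directions, one positive). -/
theorem stmt_13 (r : ℝ) (hr : 0 < r) (hr1 : r ≠ 1) :
    let vH : Fin 5 → ℝ := ![-4, 0, 0, 0, 4 * r^2]
    let vP : Fin 5 → ℝ := ![0, -4, 0, -2 * (r^2 + 1), 0]
    let vE : Fin 5 → ℝ := ![0, 2 * (r^2 - 1), 0, 2 * (r^2 - 1), 0]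
    qq vH < 0 ∧ bb vH vP = 0 ∧ bb vH vE = 0 ∧
    LinearIndependent ℝ ![vP, vE] ∧
    qq vP * qq vE - (bb vP vE)^2 < 0 ∧
    (Module.finrank ℝ (Submodule.span ℝ {vH, vP, vE}) = 3 ∧
      ∃ N P : Submodule ℝ (Fin 5 → ℝ),
        N ⊔ P = Submodule.span ℝ {vH, vP, vE} ∧
        Module.finrank ℝ N = 2 ∧ Module.finrank ℝ P = 1 ∧
        (∀ v ∈ N, v ≠ 0 → qq v < 0) ∧
        (∀ v ∈ P, v ≠ 0 → 0 < qq v)) := by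
  intro vH vP vE
  have hr2 : r ^ 2 - 1 ≠ 0 := by
    rw [sub_ne_zero, Ne, sq_eq_one_iff, not_or]
    exact ⟨hr1, by linarith⟩
  have hH : qq vH < 0 := by
    have : qq vH = -32 * r ^ 2 := by simp [vH, qq]; ring
    rw [this]; linarith [pow_pos hr 2]
  have hE : qq vE < 0 := by
    have : qq vE = -2 * (r ^ 2 - 1) ^ 2 := by simp [vE, qq]; ring
    rw [this]; linarith [even_two.pow_pos hr2]
  have hHP : bb vH vP = 0 := by simp [vH, vP, bb_apply]
  have hHE : bb vH vE = 0 := by simp [vH, vE, bb_apply]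
  have hgram : qq vP * qq vE - bb vP vE ^ 2 < 0 := by
    have : qq vP * qq vE - bb vP vE ^ 2 = -(r ^ 2 - 1) ^ 4 := by
      simp [vP, vE, qq, bb_apply]; ring
    rw [this, neg_lt_zero]
    exact Even.pow_pos (by decide) hr2
  set w := vP - (bb vP vE / qq vE) • vE
  have hw : 0 < qq w := by
    rw [qq_sub_proj hE.ne]
    exact div_pos_of_neg_of_neg hgram hE
  have hN := fun v => qq_neg_of_mem_span_pair (v := v) hH hE hHE
  have hP := fun v => qq_pos_of_mem_span_singleton (v := v) hw
  have hsup := span_pair_sup_span_sub_smul vH vP vE (bb vP vE / qq vE)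
  have hrankN : Module.finrank ℝ (Submodule.span ℝ {vH, vE}) = 2 := by
    refine finrank_span_pair (linearIndependent_pair_of_gram_ne_zero ?_)
    rw [hHE, sq, mul_zero, sub_zero]
    exact (mul_pos_of_neg_of_neg hH hE).ne'
  have hrankP : Module.finrank ℝ (Submodule.span ℝ {w}) = 1 :=
    finrank_span_singleton (by rintro hw0; simp [hw0, qq] at hw)
  refine ⟨hH, hHP, hHE, linearIndependent_pair_of_gram_ne_zero hgram.ne, hgram, ?_,
    _, _, hsup, hrankN, hrankP, hN, hP⟩
  rw [← hsup, finrank_sup_eq_add_of_neg_of_pos qq _ _ hN hP, hrankN, hrankP]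
end

section
/- Let v_H = −2XY³, v_P = Y⁴ − 2XY³, v_E = Y⁴ − X⁴ − 2X²Y² + X³Y − XY³, the tangent vectors at f = XY²(X−Y) to its PSL(2,R)-orbit. Then v_H + v_P = Y⁴ is a q-null vector orthogonal to all of v_H, v_P, v_E, and the quotient of span{v_H, v_P, v_E} by the line R·(v_H+v_P) carries an induced form of signature (1,1). Hence this tangent space has signature (1,1,1). -/
lemma bb_expand (f g : Fin 5 → ℝ) :
    bb f g = f 0 * g 4 + g 0 * f 4 - (1/4) * (f 3 * g 1 + g 3 * f 1) + (1/6) * (f 2 * g 2) := by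
  simp only [bb, qq, Pi.add_apply]; ring

lemma bb_add (f x y : Fin 5 → ℝ) : bb f (x + y) = bb f x + bb f y := by
  simp only [bb_expand, Pi.add_apply]; ring

lemma bb_smul (f : Fin 5 → ℝ) (c : ℝ) (x : Fin 5 → ℝ) : bb f (c • x) = c * bb f x := by
  simp only [bb_expand, Pi.smul_apply, smul_eq_mul]; ring

/-- For the tangent vectors `v_H = −2XY³`, `v_P = Y⁴ − 2XY³`,
`v_E = Y⁴ − X⁴ − 2X²Y² + X³Y − XY³` at `f = XY²(X−Y)`: the vector `n = v_H + v_P`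
is `q`-null and `B`-orthogonal to `v_H, v_P, v_E`, and the form induced on the quotient of
`span{v_H, v_P, v_E}` by the line `ℝ·n` has signature (1,1); hence the tangent space has
signature (1,1,1). -/
theorem stmt_14 :
    let vH : Fin 5 → ℝ := ![0, 0, 0, -2, 0]
    let vP : Fin 5 → ℝ := ![0, 0, 0, -2, 1]
    let vE : Fin 5 → ℝ := ![-1, 1, -2, -1, 1]
    let n : Fin 5 → ℝ := vH + vP
    qq n = 0 ∧ bb n vH = 0 ∧ bb n vP = 0 ∧ bb n vE = 0 ∧
    (∀ x ∈ Submodule.span ℝ {vH, vP, vE}, bb n x = 0) ∧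
    ∃ u w : Fin 5 → ℝ,
      u ∈ Submodule.span ℝ {vH, vP, vE} ∧ w ∈ Submodule.span ℝ {vH, vP, vE} ∧
      bb u w = 0 ∧ qq u < 0 ∧ 0 < qq w ∧
      Submodule.span ℝ {n, u, w} = Submodule.span ℝ {vH, vP, vE} ∧
      Module.finrank ℝ (Submodule.span ℝ {vH, vP, vE}) = 3 := by
  intro vH vP vE n
  have hnH : bb n vH = 0 := by
    simp [bb_expand, n, vH, vP, Pi.add_apply]
  have hnP : bb n vP = 0 := by
    simp [bb_expand, n, vH, vP, Pi.add_apply]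
  have hnE : bb n vE = 0 := by
    simp [bb_expand, n, vH, vP, vE, Pi.add_apply]; norm_num
  have hqn : qq n = 0 := by
    simp [qq, n, vH, vP, Pi.add_apply]
  refine ⟨hqn, hnH, hnP, hnE, ?_, ?_⟩
  · intro x hx
    induction hx using Submodule.span_induction with
    | mem x hx =>
      rcases hx with h | h | h
      · rw [h]; exact hnH
      · rw [h]; exact hnP
      · rw [h]; exact hnE
    | zero => have := bb_smul n 0 0; simpa using this
    | add x y _ _ hx hy => rw [bb_add, hx, hy, add_zero]
    | smul c x _ hx => rw [bb_smul, hx, mul_zero]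
  · refine ⟨vE, (5:ℝ) • vH + (3:ℝ) • vE, ?_, ?_, ?_, ?_, ?_, ?_, ?_⟩
    · exact Submodule.subset_span (by simp)
    · exact Submodule.add_mem _ (Submodule.smul_mem _ _ (Submodule.subset_span (by simp)))
        (Submodule.smul_mem _ _ (Submodule.subset_span (by simp)))
    · simp [bb_expand, vH, vE, Pi.add_apply, Pi.smul_apply]; norm_num
    · simp [qq, vE]; norm_num
    · simp [qq, vH, vE, Pi.add_apply, Pi.smul_apply]; norm_num
    · -- span equality
      apply le_antisymm
      · rw [Submodule.span_le]
        intro x hx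
        rcases hx with h | h | h
        · rw [h]
          exact Submodule.add_mem _ (Submodule.subset_span (by simp))
            (Submodule.subset_span (by simp))
        · rw [h]
          exact Submodule.subset_span (by simp)
        · rw [h]
          exact Submodule.add_mem _ (Submodule.smul_mem _ _ (Submodule.subset_span (by simp)))
            (Submodule.smul_mem _ _ (Submodule.subset_span (by simp)))
      · rw [Submodule.span_le]
        have hu : vE ∈ Submodule.span ℝ {n, vE, (5:ℝ) • vH + (3:ℝ) • vE} :=
          Submodule.subset_span (by simp)
        have hw : (5:ℝ) • vH + (3:ℝ) • vE ∈ Submodule.span ℝ {n, vE, (5:ℝ) • vH + (3:ℝ) • vE} :=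
          Submodule.subset_span (by simp)
        have hn : n ∈ Submodule.span ℝ {n, vE, (5:ℝ) • vH + (3:ℝ) • vE} :=
          Submodule.subset_span (by simp)
        have hvH : vH ∈ Submodule.span ℝ {n, vE, (5:ℝ) • vH + (3:ℝ) • vE} := by
          have heq : vH = (1/5:ℝ) • ((5:ℝ) • vH + (3:ℝ) • vE) + (-(3/5):ℝ) • vE := by
            funext i; simp [vH, vE, Pi.add_apply, Pi.smul_apply]
            fin_cases i <;> norm_num
          have hmem := Submodule.add_mem _ (Submodule.smul_mem _ ((1:ℝ)/5) hw)
            (Submodule.smul_mem _ (-(3/5):ℝ) hu)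
          rwa [← heq] at hmem
        intro x hx
        rcases hx with h | h | h
        · rw [h]; exact hvH
        · rw [h]
          have heq : vP = n + (-1:ℝ) • vH := by
            funext i; simp [n, Pi.add_apply, Pi.smul_apply]
          have hmem := Submodule.add_mem _ hn (Submodule.smul_mem _ (-1:ℝ) hvH)
          rwa [← heq] at hmem
        · rw [h]; exact hu
    · -- finrank
      have hli : LinearIndependent ℝ ![vH, vP, vE] := by
        rw [Fintype.linearIndependent_iff]
        intro g hg i
        have h0 := congrFun hg 0
        have h3 := congrFun hg 3
        have h4 := congrFun hg 4
        simp [Fin.sum_univ_three, vH, vP, vE, Matrix.vecHead, Matrix.vecTail, Pi.add_apply, Pi.smul_apply] at h0 h3 h4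
        fin_cases i <;> simp <;> linarith
      have hset : ({vH, vP, vE} : Set (Fin 5 → ℝ)) = Set.range ![vH, vP, vE] := by
        simp [Matrix.range_cons, Matrix.range_empty]
        ext x; simp only [Set.mem_insert_iff, Set.mem_singleton_iff]; tauto
      rw [hset, finrank_span_eq_card hli]
      simp
end

section
/- Let r ∈ R, and let v_H = −4rY⁴ − 2X³Y + 2XY³, v_P = −3X²Y² + 2rXY³ − Y⁴, v_E = X⁴ − Y⁴ − 2rX³Y − 2rXY³ be the tangent vectors at f = Y(X²+Y²)(X−rY) to its PSL(2,R)-orbit. Then the three vectors w1 = (7r+3r³)v_H + (6−2r²)v_P + (5+r²)v_E, w2 = 4v_P + v_E, w3 = v_H are pairwise B-orthogonal with q(w1) < 0, q(w2) > 0, q(w3) > 0; hence span{v_H, v_P, v_E} has signature (1,2). -/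
/-!
Orthogonality and the three values of `q` are direct computations; in fact
`q(w₁) = -8(1+r²)²(7+3r²)`, `q(w₂) = 2(7+3r²)` and `q(w₃) = 2`.
A line on which `q` is negative and a plane on which it is positive meet only in `0`,
so together they span a 3-dimensional space; it lies in `span{v_H, v_P, v_E}`,
which has dimension at most 3, hence is all of it.
-/

open Module Submodule

theorem finrank_span_triple_le {K V : Type*} [DivisionRing K] [AddCommGroup V] [Module K V]
    (a b c : V) : finrank K (span K {a, b, c}) ≤ 3 := by
  classical
  have h := (finrank_span_finset_le_card (R := K) ({a, b, c} : Finset V)).trans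
    Finset.card_le_three
  push_cast at h
  exact h

namespace QuadraticMap

section CommRing

variable {R V : Type*} [CommRing R] [AddCommGroup V] [Module R V] (Q : QuadraticMap R V R)

theorem apply_smul_add_smul_of_polar_eq_zero {u v : V} (h : polar Q u v = 0) (a b : R) :
    Q (a • u + b • v) = a ^ 2 * Q u + b ^ 2 * Q v := by
  rw [QuadraticMap.map_add (⇑Q), polar_smul_left, polar_smul_right, h, Q.map_smul, Q.map_smul]
  simp only [smul_eq_mul, mul_zero, add_zero]
  ring

theorem disjoint_of_neg_of_pos [PartialOrder R] {N P : Submodule R V}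
    (hN : ∀ x ∈ N, x ≠ 0 → Q x < 0) (hP : ∀ x ∈ P, x ≠ 0 → 0 < Q x) : Disjoint N P := by
  refine disjoint_def.mpr fun x hxN hxP => ?_
  by_contra hx
  exact (hN x hxN hx).not_gt (hP x hxP hx)

end CommRing

variable {K V : Type*} [Field K] [LinearOrder K] [AddCommGroup V] [Module K V]
  (Q : QuadraticForm K V)

theorem finrank_span_singleton_of_neg {u : V} (hu : Q u < 0) : finrank K (span K {u}) = 1 :=
  finrank_span_singleton <| ne_of_apply_ne Q <| by simpa using hu.ne

variable [IsStrictOrderedRing K]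

theorem apply_neg_of_mem_span_singleton {u x : V} (hu : Q u < 0) (hx : x ∈ span K {u})
    (hx0 : x ≠ 0) : Q x < 0 := by
  obtain ⟨a, rfl⟩ := mem_span_singleton.mp hx
  have ha : a ≠ 0 := by rintro rfl; simp at hx0
  rw [Q.map_smul, smul_eq_mul]
  exact mul_neg_of_pos_of_neg (mul_self_pos.mpr ha) hu

theorem apply_pos_of_mem_span_pair {v w x : V} (hv : 0 < Q v) (hw : 0 < Q w)
    (hvw : polar Q v w = 0) (hx : x ∈ span K {v, w}) (hx0 : x ≠ 0) : 0 < Q x := by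
  obtain ⟨a, b, rfl⟩ := mem_span_pair.mp hx
  rw [Q.apply_smul_add_smul_of_polar_eq_zero hvw]
  rcases eq_or_ne a 0 with rfl | ha
  · have hb : b ≠ 0 := by rintro rfl; simp at hx0
    have := sq_pos_of_ne_zero hb
    positivity
  · have := sq_pos_of_ne_zero ha
    positivity

theorem linearIndependent_pair_of_pos {v w : V} (hv : 0 < Q v) (hw : 0 < Q w)
    (hvw : polar Q v w = 0) : LinearIndependent K ![v, w] := by
  refine LinearIndependent.pair_iff.mpr fun a b hab => ?_
  have h := Q.apply_smul_add_smul_of_polar_eq_zero hvw a b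
  rw [hab, map_zero, eq_comm, add_eq_zero_iff_of_nonneg (by positivity) (by positivity)] at h
  simpa [hv.ne', hw.ne'] using h

theorem finrank_span_pair_of_pos {v w : V} (hv : 0 < Q v) (hw : 0 < Q w)
    (hvw : polar Q v w = 0) : finrank K (span K {v, w}) = 2 := by
  have h := finrank_span_eq_card (Q.linearIndependent_pair_of_pos hv hw hvw)
  rwa [Matrix.range_cons_cons_empty, Fintype.card_fin] at h

theorem span_singleton_sup_span_pair_eq [FiniteDimensional K V] {u v w : V}
    {W : Submodule K V} (hW : finrank K W ≤ 3) (hu : u ∈ W) (hv : v ∈ W) (hw : w ∈ W)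
    (hQu : Q u < 0) (hQv : 0 < Q v) (hQw : 0 < Q w) (hvw : polar Q v w = 0) :
    span K {u} ⊔ span K {v, w} = W := by
  have hdisj := Q.disjoint_of_neg_of_pos (fun _ => Q.apply_neg_of_mem_span_singleton hQu)
    (fun _ => Q.apply_pos_of_mem_span_pair hQv hQw hvw)
  have hdim := finrank_sup_add_finrank_inf_eq (span K {u}) (span K {v, w})
  rw [hdisj.eq_bot, finrank_bot, add_zero, Q.finrank_span_singleton_of_neg hQu,
    Q.finrank_span_pair_of_pos hQv hQw hvw] at hdim
  refine eq_of_le_of_finrank_le (sup_le ?_ ?_) (by omega)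
  · exact span_le.mpr (by simpa using hu)
  · exact span_le.mpr (by simp [Set.insert_subset_iff, hv, hw])

end QuadraticMap

noncomputable def qqForm : QuadraticForm ℝ (Fin 5 → ℝ) :=
  2 • QuadraticMap.proj 0 4 - (1 / 2 : ℝ) • QuadraticMap.proj 3 1 +
    (1 / 6 : ℝ) • QuadraticMap.proj 2 2

theorem coe_qqForm : ⇑qqForm = qq := by
  ext a
  simp only [qqForm, qq, add_apply, sub_apply, smul_apply, QuadraticMap.proj_apply,
    nsmul_eq_mul, smul_eq_mul]
  ring

theorem bb_eq_half_polar (f g : Fin 5 → ℝ) : bb f g = 1 / 2 * QuadraticMap.polar qq f g := rfl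

/-- For the tangent vectors `v_H = −4rY⁴ − 2X³Y + 2XY³`, `v_P = −3X²Y² + 2rXY³ − Y⁴`,
`v_E = X⁴ − Y⁴ − 2rX³Y − 2rXY³` at `f = Y(X²+Y²)(X−rY)`, the vectors
`w₁ = (7r+3r³)v_H + (6−2r²)v_P + (5+r²)v_E`, `w₂ = 4v_P + v_E`, `w₃ = v_H` are pairwise
`B`-orthogonal with `q(w₁) < 0`, `q(w₂) > 0`, `q(w₃) > 0`; hence `span{v_H, v_P, v_E}`
has signature (1,2) (one negative, two positive directions). -/
theorem stmt_16 (r : ℝ) :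
    let vH : Fin 5 → ℝ := ![0, -2, 0, 2, -4 * r]
    let vP : Fin 5 → ℝ := ![0, 0, -3, 2 * r, -1]
    let vE : Fin 5 → ℝ := ![1, -2 * r, 0, -2 * r, -1]
    let w₁ : Fin 5 → ℝ := (7 * r + 3 * r^3) • vH + (6 - 2 * r^2) • vP + (5 + r^2) • vE
    let w₂ : Fin 5 → ℝ := (4 : ℝ) • vP + vE
    let w₃ : Fin 5 → ℝ := vH
    bb w₁ w₂ = 0 ∧ bb w₁ w₃ = 0 ∧ bb w₂ w₃ = 0 ∧
    qq w₁ < 0 ∧ 0 < qq w₂ ∧ 0 < qq w₃ ∧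
    ∃ N P : Submodule ℝ (Fin 5 → ℝ),
      N ⊔ P = Submodule.span ℝ {vH, vP, vE} ∧
      Module.finrank ℝ N = 1 ∧ Module.finrank ℝ P = 2 ∧
      (∀ v ∈ N, v ≠ 0 → qq v < 0) ∧
      (∀ v ∈ P, v ≠ 0 → 0 < qq v) := by
  intro vH vP vE w₁ w₂ w₃
  obtain ⟨hq₁, hq₂, hq₃, hb₁₂, hb₁₃, hb₂₃⟩ :
      qq w₁ = -(8 * (1 + r ^ 2) ^ 2 * (7 + 3 * r ^ 2)) ∧ qq w₂ = 2 * (7 + 3 * r ^ 2) ∧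
      qq w₃ = 2 ∧ bb w₁ w₂ = 0 ∧ bb w₁ w₃ = 0 ∧ bb w₂ w₃ = 0 := by
    simp only [bb, qq, w₁, w₂, w₃, vH, vP, vE, Pi.add_apply, Pi.smul_apply, smul_eq_mul,
      Matrix.cons_val]
    refine ⟨by ring, by ring, by ring, by ring, by ring, by ring⟩
  have hneg : qq w₁ < 0 := by rw [hq₁, neg_lt_zero]; positivity
  have hpos₂ : 0 < qq w₂ := by rw [hq₂]; positivity
  have hpos₃ : 0 < qq w₃ := by rw [hq₃]; norm_num
  rw [← coe_qqForm] at hneg hpos₂ hpos₃ ⊢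
  have hpolar : QuadraticMap.polar qqForm w₂ w₃ = 0 := by
    rw [coe_qqForm]; simpa [bb_eq_half_polar] using hb₂₃
  have hH : vH ∈ span ℝ {vH, vP, vE} := subset_span (by simp)
  have hP : vP ∈ span ℝ {vH, vP, vE} := subset_span (by simp)
  have hE : vE ∈ span ℝ {vH, vP, vE} := subset_span (by simp)
  have hw₁ : w₁ ∈ span ℝ {vH, vP, vE} :=
    add_mem (add_mem (smul_mem _ _ hH) (smul_mem _ _ hP)) (smul_mem _ _ hE)
  have hw₂ : w₂ ∈ span ℝ {vH, vP, vE} := add_mem (smul_mem _ _ hP) hE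
  refine ⟨hb₁₂, hb₁₃, hb₂₃, hneg, hpos₂, hpos₃, span ℝ {w₁}, span ℝ {w₂, w₃},
    qqForm.span_singleton_sup_span_pair_eq (finrank_span_triple_le _ _ _) hw₁ hw₂ hH
      hneg hpos₂ hpos₃ hpolar,
    qqForm.finrank_span_singleton_of_neg hneg, qqForm.finrank_span_pair_of_pos hpos₂ hpos₃ hpolar,
    fun _ => qqForm.apply_neg_of_mem_span_singleton hneg,
    fun _ => qqForm.apply_pos_of_mem_span_pair hpos₂ hpos₃ hpolar⟩
end

section
/- A nonzero real homogeneous quartic f satisfies q(f) = 0 if and only if either f has a real linear factor of multiplicity at least 3, or f = cL₁L₂Q where L₁, L₂ are non-proportional real linear forms, Q = (X−zY)(X−z̄Y) with z = |z|e^{iθ} in the upper half-plane, and, after moving the roots of L₁, L₂ to 0 and ∞ by a real Möbius transformation, cos²θ = 3/4. -/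
/-!
`q` is `SL(2, ℝ)`-invariant, so `f` may be normalised. If `q(f) = 0` then `f` has a real root: a
shear kills the `X³Y` coefficient, after which `q = 0` forces the `X⁴` and `Y⁴` coefficients to have
opposite signs (or to vanish), so `f(x, 1)` changes sign on `[0, ∞)`. Moving that root to `(1 : 0)`
kills the `X⁴` coefficient, and `q = 0` then says that `f = c Y ((X + tY)³ + u³Y³)`. A last shear
gives `f = c XY (X² - 3uXY + 3u²Y²)`: a triple factor if `u = 0`, and otherwise the normal form with
`m = √3 |u|` and `cos θ = ± √3 / 2`. Conversely `q` vanishes on `L³M` and on the normal forms by direct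
computation.
-/

open Matrix (SpecialLinearGroup det_fin_two det_fin_two_of mul_apply)

def precomp (M : Matrix (Fin 2) (Fin 2) ℝ) (F : ℝ → ℝ → ℝ) (x y : ℝ) : ℝ :=
  F (M 0 0 * x + M 0 1 * y) (M 1 0 * x + M 1 1 * y)

lemma precomp_one (F : ℝ → ℝ → ℝ) : precomp 1 F = F := by
  funext x y
  simp [precomp]

lemma precomp_mul (M N : Matrix (Fin 2) (Fin 2) ℝ) (F : ℝ → ℝ → ℝ) :
    precomp (M * N) F = precomp N (precomp M F) := by
  funext x y
  simp only [precomp, mul_apply, Fin.sum_univ_two]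
  ring_nf

lemma precomp_inv_precomp (g : SpecialLinearGroup (Fin 2) ℝ) (F : ℝ → ℝ → ℝ) :
    precomp ↑g⁻¹ (precomp g F) = F := by
  rw [← precomp_mul, ← Matrix.SpecialLinearGroup.coe_mul, mul_inv_cancel,
    Matrix.SpecialLinearGroup.coe_one, precomp_one]

def shear (t : ℝ) : SpecialLinearGroup (Fin 2) ℝ := ⟨!![1, t; 0, 1], by simp⟩

lemma precomp_shear (t : ℝ) (F : ℝ → ℝ → ℝ) (x y : ℝ) :
    precomp (shear t) F x y = F (x + t * y) y := by
  simp [precomp, shear]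

lemma exists_SL2_col_zero_eq {x₀ y₀ : ℝ} (h : (x₀, y₀) ≠ (0, 0)) :
    ∃ g : SpecialLinearGroup (Fin 2) ℝ, g 0 0 = x₀ ∧ g 1 0 = y₀ := by
  have hn : x₀ ^ 2 + y₀ ^ 2 ≠ 0 := by
    contrapose! h
    simp only [Prod.mk.injEq]
    constructor <;> nlinarith [sq_nonneg x₀, sq_nonneg y₀]
  refine ⟨⟨!![x₀, -y₀ / (x₀ ^ 2 + y₀ ^ 2); y₀, x₀ / (x₀ ^ 2 + y₀ ^ 2)], ?_⟩, rfl, rfl⟩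
  rw [det_fin_two_of]
  field_simp
  ring

lemma ev_injective : Function.Injective ev := by
  intro a b h
  have h₁ := congrFun₂ h 1 0
  have h₂ := congrFun₂ h 0 1
  have h₃ := congrFun₂ h 1 1
  have h₄ := congrFun₂ h 1 (-1)
  have h₅ := congrFun₂ h 2 1
  simp only [ev] at h₁ h₂ h₃ h₄ h₅
  norm_num at h₁ h₂ h₃ h₄ h₅
  funext i
  fin_cases i <;> simp <;> linarith

lemma exists_ev_linear_subst_eq (a : Fin 5 → ℝ) (P Q R S : ℝ) :
    ∃ b, (∀ x y, ev a (P * x + Q * y) (R * x + S * y) = ev b x y) ∧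
      qq b = (P * S - Q * R) ^ 4 * qq a := by
  refine ⟨![P^4*a 0 + P^3*R*a 1 + P^2*R^2*a 2 + P*R^3*a 3 + R^4*a 4,
    4*P^3*Q*a 0 + (P^3*S + 3*P^2*Q*R)*a 1 + (2*P^2*R*S + 2*P*Q*R^2)*a 2
      + (3*P*R^2*S + Q*R^3)*a 3 + 4*R^3*S*a 4,
    6*P^2*Q^2*a 0 + (3*P^2*Q*S + 3*P*Q^2*R)*a 1 + (P^2*S^2 + 4*P*Q*R*S + Q^2*R^2)*a 2
      + (3*P*R*S^2 + 3*Q*R^2*S)*a 3 + 6*R^2*S^2*a 4,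
    4*P*Q^3*a 0 + (3*P*Q^2*S + Q^3*R)*a 1 + (2*P*Q*S^2 + 2*Q^2*R*S)*a 2
      + (P*S^3 + 3*Q*R*S^2)*a 3 + 4*R*S^3*a 4,
    Q^4*a 0 + Q^3*S*a 1 + Q^2*S^2*a 2 + Q*S^3*a 3 + S^4*a 4], fun x y => ?_, ?_⟩
  · simp only [ev, Matrix.cons_val]
    ring
  · simp only [qq, Matrix.cons_val]
    ring

lemma exists_precomp_ev_eq (M : Matrix (Fin 2) (Fin 2) ℝ) (a : Fin 5 → ℝ) :
    ∃ b, precomp M (ev a) = ev b ∧ qq b = M.det ^ 4 * qq a := by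
  obtain ⟨b, hb, hqq⟩ := exists_ev_linear_subst_eq a (M 0 0) (M 0 1) (M 1 0) (M 1 1)
  exact ⟨b, funext₂ hb, by rw [hqq, det_fin_two]⟩

lemma qq_eq_of_precomp_eq {g : SpecialLinearGroup (Fin 2) ℝ} {a b : Fin 5 → ℝ}
    (h : precomp g (ev a) = ev b) : qq b = qq a := by
  obtain ⟨b', hb', hqq⟩ := exists_precomp_ev_eq g a
  rw [ev_injective (h.symm.trans hb'), hqq, g.det_coe, one_pow, one_mul]

open Polynomial in
lemma Polynomial.exists_nonneg_root_of_eval_zero_nonpos {p : ℝ[X]} (hdeg : 0 < p.degree)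
    (hlc : 0 ≤ p.leadingCoeff) (h0 : p.eval 0 ≤ 0) : ∃ x, 0 ≤ x ∧ p.eval x = 0 :=
  intermediate_value_Ici p.continuous.continuousOn
    (p.tendsto_atTop_of_leadingCoeff_nonneg hdeg hlc) (Set.mem_Ici.mpr h0)

open Polynomial in
lemma exists_ev_eq_zero_of_mul_nonpos {a : Fin 5 → ℝ} (h : a 0 * a 4 ≤ 0) :
    ∃ x y : ℝ, (x, y) ≠ (0, 0) ∧ ev a x y = 0 := by
  wlog h0 : 0 ≤ a 0 generalizing a
  · obtain ⟨x, y, hxy, hev⟩ := this (a := -a) (by simpa using h) (by rw [Pi.neg_apply]; linarith)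
    refine ⟨x, y, hxy, ?_⟩
    simpa only [ev, Pi.neg_apply, neg_mul, ← neg_add, neg_eq_zero] using hev
  rcases h0.eq_or_lt with h0 | h0
  · exact ⟨1, 0, by simp, by simp [ev, ← h0]⟩
  set p : ℝ[X] := C (a 0) * X ^ 4 + C (a 1) * X ^ 3 + C (a 2) * X ^ 2 + C (a 3) * X + C (a 4)
  have hdeg : p.natDegree = 4 := by
    simp only [p]
    compute_degree!
    exact h0.ne'
  have hlc : p.leadingCoeff = a 0 := by
    rw [leadingCoeff, hdeg]
    simp [p]
  obtain ⟨x, -, hx⟩ := p.exists_nonneg_root_of_eval_zero_nonpos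
    (natDegree_pos_iff_degree_pos.mp (by rw [hdeg]; norm_num))
    (by rw [hlc]; exact h0.le) (by simp [p]; nlinarith)
  exact ⟨x, 1, by simp, by simpa [p, ev] using hx⟩

lemma exists_ev_eq_zero_of_qq_eq_zero {a : Fin 5 → ℝ} (hq : qq a = 0) :
    ∃ x y : ℝ, (x, y) ≠ (0, 0) ∧ ev a x y = 0 := by
  by_cases h0 : a 0 = 0
  · exact exists_ev_eq_zero_of_mul_nonpos (by simp [h0])
  obtain ⟨t, ht⟩ : ∃ t, 4 * a 0 * t + a 1 = 0 := ⟨-a 1 / (4 * a 0), by field_simp; ring⟩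
  set b : Fin 5 → ℝ := ![a 0, 0, 6 * a 0 * t ^ 2 + 3 * a 1 * t + a 2,
    4 * a 0 * t ^ 3 + 3 * a 1 * t ^ 2 + 2 * a 2 * t + a 3, ev a t 1]
  have hb : precomp (shear t) (ev a) = ev b := by
    funext x y
    simp only [precomp_shear, ev, b, Matrix.cons_val]
    linear_combination (x ^ 3 * y) * ht
  have hqb : qq b = 0 := (qq_eq_of_precomp_eq hb).trans hq
  obtain ⟨x, y, hxy, hx⟩ := exists_ev_eq_zero_of_mul_nonpos (a := b) <| by
    simp only [qq, b, Matrix.cons_val] at hqb ⊢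
    nlinarith [sq_nonneg (6 * a 0 * t ^ 2 + 3 * a 1 * t + a 2)]
  refine ⟨x + t * y, y, ?_, by rw [← precomp_shear t (ev a), hb, hx]⟩
  contrapose! hxy
  simp only [Prod.mk.injEq] at hxy ⊢
  exact ⟨by linear_combination hxy.1 - t * hxy.2, hxy.2⟩

lemma exists_cube_eq (e : ℝ) : ∃ u : ℝ, u ^ 3 = e := by
  rcases le_total 0 e with he | he
  · exact ⟨e ^ ((3 : ℕ)⁻¹ : ℝ), Real.rpow_inv_natCast_pow he (by norm_num)⟩
  · refine ⟨-(-e) ^ ((3 : ℕ)⁻¹ : ℝ), ?_⟩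
    rw [neg_pow, Real.rpow_inv_natCast_pow (neg_nonneg.mpr he) (by norm_num)]
    ring

lemma exists_shear_eq_of_coeff_zero {a : Fin 5 → ℝ} (h0 : a 0 = 0) (h1 : a 1 ≠ 0)
    (hq : qq a = 0) : ∃ s u : ℝ, ∀ x y,
      ev a (x + s * y) y = a 1 * (x * y * (x ^ 2 - 3 * u * x * y + 3 * u ^ 2 * y ^ 2)) := by
  obtain ⟨t, ht⟩ : ∃ t, a 2 = 3 * a 1 * t := ⟨a 2 / (3 * a 1), by field_simp⟩
  obtain ⟨u, hu⟩ := exists_cube_eq (a 4 / a 1 - t ^ 3)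
  -- `q = 0` makes `ev a x y = a₁ y (x + t y)³ + (a₄ - a₁ t³) y⁴`
  have h3 : a 3 = 3 * a 1 * t ^ 2 := by
    have : a 1 * (a 3 - 3 * a 1 * t ^ 2) = 0 := by
      simp only [qq, h0, ht] at hq
      linear_combination -2 * hq
    simpa [h1, sub_eq_zero] using this
  have h4 : a 4 = a 1 * (t ^ 3 + u ^ 3) := by
    rw [hu]
    field_simp
    ring
  refine ⟨-(t + u), u, fun x y => ?_⟩
  simp only [ev, h0, ht, h3, h4]
  ring

def HasTripleFactor (F : ℝ → ℝ → ℝ) : Prop :=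
  ∃ s t s' t' : ℝ, (s, t) ≠ (0, 0) ∧ ∀ x y : ℝ, F x y = (s * x + t * y) ^ 3 * (s' * x + t' * y)

/- The roots `0, ∞, m e^{± iθ}` of the normal form have cross-ratio `e^{2iθ}`, and `cos² θ = 3/4`
makes it a primitive sixth root of unity. -/
def HasEquianharmonicNormalForm (F : ℝ → ℝ → ℝ) : Prop :=
  ∃ (g : SpecialLinearGroup (Fin 2) ℝ) (c m θ : ℝ),
    c ≠ 0 ∧ 0 < m ∧ 0 < θ ∧ θ < Real.pi ∧ Real.cos θ ^ 2 = 3 / 4 ∧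
    ∀ x y : ℝ, precomp (g : Matrix (Fin 2) (Fin 2) ℝ) F x y =
      c * (x * y * (x ^ 2 - 2 * m * Real.cos θ * x * y + m ^ 2 * y ^ 2))

lemma hasTripleFactor_precomp {F : ℝ → ℝ → ℝ} (hF : HasTripleFactor F)
    (g : SpecialLinearGroup (Fin 2) ℝ) : HasTripleFactor (precomp g F) := by
  obtain ⟨s, t, s', t', hst, hF⟩ := hF
  have hdet : g 0 0 * g 1 1 - g 0 1 * g 1 0 = 1 := by rw [← det_fin_two]; exact g.det_coe
  refine ⟨s * g 0 0 + t * g 1 0, s * g 0 1 + t * g 1 1, s' * g 0 0 + t' * g 1 0,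
    s' * g 0 1 + t' * g 1 1, ?_, fun x y => by rw [precomp, hF]; ring⟩
  contrapose! hst
  simp only [Prod.mk.injEq] at hst ⊢
  exact ⟨by linear_combination g 1 1 * hst.1 - g 1 0 * hst.2 - s * hdet,
    by linear_combination g 0 0 * hst.2 - g 0 1 * hst.1 - t * hdet⟩

lemma HasTripleFactor.of_precomp {g : SpecialLinearGroup (Fin 2) ℝ} {F : ℝ → ℝ → ℝ}
    (h : HasTripleFactor (precomp g F)) : HasTripleFactor F := by
  simpa only [precomp_inv_precomp] using hasTripleFactor_precomp h g⁻¹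

lemma HasEquianharmonicNormalForm.of_precomp {g : SpecialLinearGroup (Fin 2) ℝ}
    {F : ℝ → ℝ → ℝ} (h : HasEquianharmonicNormalForm (precomp g F)) :
    HasEquianharmonicNormalForm F := by
  obtain ⟨g', c, m, θ, hc, hm, hθ₀, hθπ, hcos, hF⟩ := h
  refine ⟨g * g', c, m, θ, hc, hm, hθ₀, hθπ, hcos, fun x y => ?_⟩
  rw [Matrix.SpecialLinearGroup.coe_mul, precomp_mul]
  exact hF x y

lemma exists_angle_of_ne_zero {u : ℝ} (hu : u ≠ 0) : ∃ m θ : ℝ, 0 < m ∧ 0 < θ ∧ θ < Real.pi ∧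
    Real.cos θ ^ 2 = 3 / 4 ∧ 2 * m * Real.cos θ = 3 * u ∧ m ^ 2 = 3 * u ^ 2 := by
  set m := √3 * |u|
  have hm : 0 < m := by positivity
  have hm2 : m ^ 2 = 3 * u ^ 2 := by rw [mul_pow, sq_abs, Real.sq_sqrt (by norm_num)]
  set c := 3 * u / (2 * m)
  have hc : c ^ 2 = 3 / 4 := by
    rw [div_pow, mul_pow, mul_pow, hm2]
    field_simp
    ring
  have hc₁ : -1 < c := by nlinarith
  have hc₂ : c < 1 := by nlinarith
  have hcos : Real.cos (Real.arccos c) = c := Real.cos_arccos hc₁.le hc₂.le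
  refine ⟨m, Real.arccos c, hm, Real.arccos_pos.mpr hc₂, Real.arccos_lt_pi.mpr hc₁,
    by rw [hcos, hc], ?_, hm2⟩
  rw [hcos]
  exact mul_div_cancel₀ _ (by positivity)

lemma hasTripleFactor_or_hasEquianharmonicNormalForm_of_coeff_zero {a : Fin 5 → ℝ}
    (h0 : a 0 = 0) (hq : qq a = 0) :
    HasTripleFactor (ev a) ∨ HasEquianharmonicNormalForm (ev a) := by
  by_cases h1 : a 1 = 0
  · have h2 : a 2 = 0 := by simpa [qq, h0, h1] using hq
    exact Or.inl ⟨0, 1, a 3, a 4, by simp, fun x y => by simp only [ev, h0, h1, h2]; ring⟩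
  obtain ⟨s, u, hsu⟩ := exists_shear_eq_of_coeff_zero h0 h1 hq
  by_cases hu : u = 0
  · refine Or.inl (HasTripleFactor.of_precomp (g := shear s) ⟨1, 0, 0, a 1, by simp, ?_⟩)
    intro x y
    rw [precomp_shear, hsu, hu]
    ring
  · obtain ⟨m, θ, hm, hθ₀, hθπ, hcos, hmcos, hm2⟩ := exists_angle_of_ne_zero hu
    refine Or.inr ⟨shear s, a 1, m, θ, h1, hm, hθ₀, hθπ, hcos, fun x y => ?_⟩
    rw [precomp_shear, hsu, hmcos, hm2]

lemma hasTripleFactor_or_hasEquianharmonicNormalForm_of_qq_eq_zero {a : Fin 5 → ℝ}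
    (hq : qq a = 0) : HasTripleFactor (ev a) ∨ HasEquianharmonicNormalForm (ev a) := by
  obtain ⟨x₀, y₀, hxy, hzero⟩ := exists_ev_eq_zero_of_qq_eq_zero hq
  obtain ⟨g, hg₀, hg₁⟩ := exists_SL2_col_zero_eq hxy
  obtain ⟨b, hb, -⟩ := exists_precomp_ev_eq g a
  have hb₀ : b 0 = 0 := by
    have h := congrFun₂ hb 1 0
    simp only [precomp, hg₀, hg₁, mul_one, mul_zero, add_zero, hzero] at h
    simpa [ev] using h.symm
  rcases hasTripleFactor_or_hasEquianharmonicNormalForm_of_coeff_zero hb₀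
    ((qq_eq_of_precomp_eq hb).trans hq) with h | h
  · exact Or.inl (HasTripleFactor.of_precomp (hb ▸ h))
  · exact Or.inr (HasEquianharmonicNormalForm.of_precomp (hb ▸ h))

lemma qq_eq_zero_of_hasTripleFactor {a : Fin 5 → ℝ} (h : HasTripleFactor (ev a)) : qq a = 0 := by
  obtain ⟨s, t, s', t', -, h⟩ := h
  have ha : a = ![s ^ 3 * s', 3 * s ^ 2 * t * s' + s ^ 3 * t', 3 * s * t ^ 2 * s' + 3 * s ^ 2 * t * t',
      t ^ 3 * s' + 3 * s * t ^ 2 * t', t ^ 3 * t'] := by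
    refine ev_injective (funext₂ fun x y => ?_)
    rw [h]
    simp only [ev, Matrix.cons_val]
    ring
  rw [ha]
  simp only [qq, Matrix.cons_val]
  ring

lemma qq_eq_zero_of_hasEquianharmonicNormalForm {a : Fin 5 → ℝ}
    (h : HasEquianharmonicNormalForm (ev a)) : qq a = 0 := by
  obtain ⟨g, c, m, θ, -, -, -, -, hcos, h⟩ := h
  have hg : precomp g (ev a) = ev ![0, c, -(2 * c * m * Real.cos θ), c * m ^ 2, 0] := by
    funext x y
    rw [h]
    simp only [ev, Matrix.cons_val]
    ring
  rw [← qq_eq_of_precomp_eq hg]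
  simp only [qq, Matrix.cons_val]
  linear_combination (2 / 3) * c ^ 2 * m ^ 2 * hcos

theorem stmt_19_general (a : Fin 5 → ℝ) :
    qq a = 0 ↔
      ((∃ s t s' t' : ℝ, (s, t) ≠ (0, 0) ∧
          ∀ x y : ℝ, ev a x y = (s * x + t * y)^3 * (s' * x + t' * y)) ∨
       (∃ (g : Matrix.SpecialLinearGroup (Fin 2) ℝ) (c m θ : ℝ),
          c ≠ 0 ∧ 0 < m ∧ 0 < θ ∧ θ < Real.pi ∧ (Real.cos θ)^2 = 3/4 ∧
          ∀ x y : ℝ,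
            ev a ((g : Matrix (Fin 2) (Fin 2) ℝ) 0 0 * x
                    + (g : Matrix (Fin 2) (Fin 2) ℝ) 0 1 * y)
                 ((g : Matrix (Fin 2) (Fin 2) ℝ) 1 0 * x
                    + (g : Matrix (Fin 2) (Fin 2) ℝ) 1 1 * y) =
              c * (x * y * (x^2 - 2 * m * Real.cos θ * x * y + m^2 * y^2)))) :=
  ⟨hasTripleFactor_or_hasEquianharmonicNormalForm_of_qq_eq_zero,
    fun h => h.elim qq_eq_zero_of_hasTripleFactor qq_eq_zero_of_hasEquianharmonicNormalForm⟩

/-- A nonzero real quartic `f` satisfies `q(f) = 0` iff either `f = L³M` with `L ≠ 0` a real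
linear form, or `f` has two distinct real roots and a conjugate pair of non-real roots
`z = m·e^{iθ}`, `z̄`, such that after moving the two real roots to `0` and `∞` by a real
Möbius transformation (an element of SL(2,ℝ)) and rescaling, `f` becomes
`XY(X² − 2m cos θ·XY + m²Y²)` with `cos²θ = 3/4`. -/
theorem stmt_19 (a : Fin 5 → ℝ) (ha : a ≠ 0) :
    qq a = 0 ↔
      ((∃ s t s' t' : ℝ, (s, t) ≠ (0, 0) ∧
          ∀ x y : ℝ, ev a x y = (s * x + t * y)^3 * (s' * x + t' * y)) ∨
       (∃ (g : Matrix.SpecialLinearGroup (Fin 2) ℝ) (c m θ : ℝ),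
          c ≠ 0 ∧ 0 < m ∧ 0 < θ ∧ θ < Real.pi ∧ (Real.cos θ)^2 = 3/4 ∧
          ∀ x y : ℝ,
            ev a ((g : Matrix (Fin 2) (Fin 2) ℝ) 0 0 * x
                    + (g : Matrix (Fin 2) (Fin 2) ℝ) 0 1 * y)
                 ((g : Matrix (Fin 2) (Fin 2) ℝ) 1 0 * x
                    + (g : Matrix (Fin 2) (Fin 2) ℝ) 1 1 * y) =
              c * (x * y * (x^2 - 2 * m * Real.cos θ * x * y + m^2 * y^2)))) :=
  stmt_19_general a
end
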